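/- If A, B ⊆ ℤ satisfy BD(A) + BD(B) > 1, then A − B is thick. -/

import Mathlib

/-!
If `BD A + BD B > 1`, then for every `k` some window length `n` has windows `I = [x+1, x+n]` and
`J = [z+1, z+n]` with `|A ∩ I| + |B ∩ J| > n + k`. For each `t ∈ [x-z+1, x-z+k]` the sets `A ∩ I`
and `t + (B ∩ J)` both lie in `[x+1, x+n+k]`, which has `n + k` elements, so by pigeonhole they
meet, and `t ∈ A - B`.
-/

open Filter Set Pointwise

/-- `maxCount A n` = max over `x ∈ ℤ` of `|A ∩ [x+1, x+n]|`. -/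
noncomputable def maxCount (A : Set ℤ) (n : ℕ) : ℕ :=
  sSup {c : ℕ | ∃ x : ℤ, c = (A ∩ Set.Icc (x + 1) (x + n)).ncard}

/-- Upper Banach density of a set of integers. -/
noncomputable def BD (A : Set ℤ) : ℝ :=
  ⨅ n : ℕ+, (maxCount A (n : ℕ) : ℝ) / (n : ℕ)

def Thick (A : Set ℤ) : Prop :=
  ∀ k : ℕ, ∃ y : ℤ, Set.Icc (y + 1) (y + k) ⊆ A

def Syndetic (A : Set ℤ) : Prop :=
  ∃ k : ℕ, ∀ x : ℤ, (A ∩ Set.Icc (x + 1) (x + k)).Nonempty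

lemma Int.ncard_Icc (a b : ℤ) : (Icc a b).ncard = (b + 1 - a).toNat := by
  rw [← Finset.coe_Icc, ncard_coe_finset, Int.card_Icc]

lemma Set.inter_nonempty_of_ncard_lt_ncard_add_ncard {α : Type*} {s t u : Set α}
    (hu : u.Finite) (hs : s ⊆ u) (ht : t ⊆ u) (h : u.ncard < s.ncard + t.ncard) :
    (s ∩ t).Nonempty := by
  rw [← not_disjoint_iff_nonempty_inter]
  intro hst
  have hunion := ncard_union_eq hst (hu.subset hs) (hu.subset ht)
  have hle := ncard_le_ncard (union_subset hs ht) hu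
  omega

lemma ncard_inter_Icc_le (A : Set ℤ) (x : ℤ) (n : ℕ) :
    (A ∩ Icc (x + 1) (x + n)).ncard ≤ n :=
  calc (A ∩ Icc (x + 1) (x + n)).ncard ≤ (Icc (x + 1) (x + (n : ℤ))).ncard :=
        ncard_le_ncard inter_subset_right (finite_Icc _ _)
    _ = n := by rw [Int.ncard_Icc]; omega

lemma bddAbove_windowCounts (A : Set ℤ) (n : ℕ) :
    BddAbove {c : ℕ | ∃ x : ℤ, c = (A ∩ Icc (x + 1) (x + n)).ncard} := by
  refine ⟨n, ?_⟩
  rintro c ⟨x, rfl⟩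
  exact ncard_inter_Icc_le A x n

lemma exists_maxCount_eq (A : Set ℤ) (n : ℕ) :
    ∃ x : ℤ, maxCount A n = (A ∩ Icc (x + 1) (x + n)).ncard :=
  Nat.sSup_mem (s := {c | ∃ x : ℤ, c = (A ∩ Icc (x + 1) (x + n)).ncard}) ⟨_, 0, rfl⟩
    (bddAbove_windowCounts A n)

lemma mul_BD_le_maxCount (A : Set ℤ) (n : ℕ+) : (n : ℕ) * BD A ≤ maxCount A n := by
  have hBD : BD A ≤ maxCount A n / (n : ℕ) := by
    refine ciInf_le ⟨0, ?_⟩ n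
    rintro r ⟨m, rfl⟩
    positivity
  rwa [le_div_iff₀' (by exact_mod_cast n.pos)] at hBD

lemma exists_lt_maxCount_add_maxCount {A B : Set ℤ} (h : 1 < BD A + BD B) (k : ℕ) :
    ∃ n : ℕ, n + k < maxCount A n + maxCount B n := by
  obtain ⟨m, hm⟩ := exists_nat_gt ((k : ℝ) / (BD A + BD B - 1))
  let n : ℕ+ := ⟨m + 1, m.succ_pos⟩
  have hk : (k : ℝ) < (n : ℕ) * (BD A + BD B - 1) := by
    rw [div_lt_iff₀ (by linarith)] at hm
    have hmn : (m : ℝ) ≤ (n : ℕ) := by simp [n]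
    nlinarith
  refine ⟨n, ?_⟩
  have hA := mul_BD_le_maxCount A n
  have hB := mul_BD_le_maxCount B n
  exact_mod_cast (show ((n : ℕ) : ℝ) + k < maxCount A n + maxCount B n by linarith)

lemma Icc_subset_sub_of_lt_ncard_add_ncard {A B : Set ℤ} {x z : ℤ} {n k : ℕ}
    (h : n + k < (A ∩ Icc (x + 1) (x + n)).ncard + (B ∩ Icc (z + 1) (z + n)).ncard) :
    Icc (x - z + 1) (x - z + k) ⊆ A - B := by
  rintro t ⟨ht₁, ht₂⟩
  let T := (· + t) '' (B ∩ Icc (z + 1) (z + n))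
  have hA : A ∩ Icc (x + 1) (x + n) ⊆ Icc (x + 1) (x + n + k) := fun p ⟨_, hp₁, hp₂⟩ =>
    ⟨hp₁, by omega⟩
  have hT : T ⊆ Icc (x + 1) (x + n + k) := by
    rintro _ ⟨b, ⟨_, hb₁, hb₂⟩, rfl⟩
    dsimp only
    exact ⟨by omega, by omega⟩
  have hTcard : T.ncard = (B ∩ Icc (z + 1) (z + n)).ncard :=
    ncard_image_of_injective _ (add_left_injective t)
  have hwindow : (Icc (x + 1) (x + n + (k : ℤ))).ncard = n + k := by
    rw [Int.ncard_Icc]; omega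
  obtain ⟨p, ⟨hpA, -⟩, b, ⟨hbB, -⟩, rfl⟩ :=
    inter_nonempty_of_ncard_lt_ncard_add_ncard (finite_Icc _ _) hA hT (by omega)
  exact ⟨b + t, hpA, b, hbB, add_sub_cancel_left b t⟩

theorem diff_thick_of_bd_sum_gt_one (A B : Set ℤ) (h : BD A + BD B > 1) :
    Thick (A - B) := by
  intro k
  obtain ⟨n, hn⟩ := exists_lt_maxCount_add_maxCount h k
  obtain ⟨x, hx⟩ := exists_maxCount_eq A n
  obtain ⟨z, hz⟩ := exists_maxCount_eq B n
  rw [hx, hz] at hn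
  exact ⟨x - z, Icc_subset_sub_of_lt_ncard_add_ncard hn⟩
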